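/- For every γ₀ ∈ (0, 1/8), with t₁ := (1 - √(1-8γ₀))/(4γ₀), one has γ₀√(1+t₁²) - artanh(√(1+t₁²)/(1+t₁)) < 0. -/

import Mathlib

/-! Rationalising gives `t₁ = 2 / (1 + √(1 - 8γ₀)) ∈ (0, 2]`, so the first term is below
`3/8`. On the other hand `3/5 ≤ √(1 + t²)/(1 + t) < 1`, and `artanh` is monotone with
`artanh (3/5) = log 2 > 3/8`. -/

noncomputable def artanh (x : ℝ) : ℝ := 1 / 2 * Real.log ((1 + x) / (1 - x))

theorem artanh_le_artanh {x y : ℝ} (hx : -1 < x) (hxy : x ≤ y) (hy : y < 1) :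
    artanh x ≤ artanh y := by
  have hratio : (1 + x) / (1 - x) ≤ (1 + y) / (1 - y) := by
    rw [div_le_div_iff₀ (by linarith) (by linarith)]
    nlinarith
  unfold artanh
  gcongr
  exact div_pos (by linarith) (by linarith)

theorem artanh_three_fifths : artanh (3 / 5) = Real.log 2 := by
  rw [artanh, show (1 + 3 / 5 : ℝ) / (1 - 3 / 5) = 2 ^ 2 by norm_num, Real.log_pow]
  push_cast
  ring

theorem sqrt_one_add_sq_div_one_add_lt_one {t : ℝ} (ht : 0 < t) :
    √(1 + t ^ 2) / (1 + t) < 1 := by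
  rw [div_lt_one (by linarith), Real.sqrt_lt' (by linarith)]
  nlinarith

theorem three_fifths_le_sqrt_one_add_sq_div_one_add {t : ℝ} (ht : -1 < t) :
    3 / 5 ≤ √(1 + t ^ 2) / (1 + t) := by
  rw [le_div_iff₀ (by linarith)]
  exact Real.le_sqrt_of_sq_le (by nlinarith [sq_nonneg (4 * t - 9 / 16)])

theorem one_sub_sqrt_div_eq {γ : ℝ} (hγ : 0 < γ) (h : γ ≤ 1 / 8) :
    (1 - √(1 - 8 * γ)) / (4 * γ) = 2 / (1 + √(1 - 8 * γ)) := by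
  have hs : √(1 - 8 * γ) ^ 2 = 1 - 8 * γ := Real.sq_sqrt (by linarith)
  have hs0 : 0 ≤ √(1 - 8 * γ) := Real.sqrt_nonneg _
  rw [div_eq_div_iff (by positivity) (by positivity)]
  linear_combination -hs

theorem one_sub_sqrt_div_mem_Ioc {γ : ℝ} (hγ : 0 < γ) (h : γ ≤ 1 / 8) :
    (1 - √(1 - 8 * γ)) / (4 * γ) ∈ Set.Ioc 0 2 := by
  rw [one_sub_sqrt_div_eq hγ h]
  have hs0 : 0 ≤ √(1 - 8 * γ) := Real.sqrt_nonneg _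
  exact ⟨by positivity, div_le_self (by norm_num) (by linarith)⟩

theorem f_neg_at_t1 (γ₀ : ℝ) (hγ : γ₀ ∈ Set.Ioo (0 : ℝ) (1 / 8)) :
    γ₀ * Real.sqrt (1 + ((1 - Real.sqrt (1 - 8 * γ₀)) / (4 * γ₀)) ^ 2) -
      artanh (Real.sqrt (1 + ((1 - Real.sqrt (1 - 8 * γ₀)) / (4 * γ₀)) ^ 2) /
        (1 + (1 - Real.sqrt (1 - 8 * γ₀)) / (4 * γ₀))) < 0 := by
  obtain ⟨hγ0, hγ8⟩ := hγ
  obtain ⟨ht0, ht2⟩ := one_sub_sqrt_div_mem_Ioc hγ0 hγ8.le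
  set t := (1 - √(1 - 8 * γ₀)) / (4 * γ₀)
  have hS : √(1 + t ^ 2) ≤ 3 := Real.sqrt_le_iff.mpr ⟨by norm_num, by nlinarith⟩
  have hart : Real.log 2 ≤ artanh (√(1 + t ^ 2) / (1 + t)) := by
    rw [← artanh_three_fifths]
    exact artanh_le_artanh (by norm_num)
      (three_fifths_le_sqrt_one_add_sq_div_one_add (by linarith))
      (sqrt_one_add_sq_div_one_add_lt_one ht0)
  have hfirst : γ₀ * √(1 + t ^ 2) < 3 / 8 := by nlinarith [Real.sqrt_nonneg (1 + t ^ 2)]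
  linarith [Real.log_two_gt_d9]
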